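/- Let 0 < β < 1 and let t ≥ max{β^{−2}, 2}. Then for every integer l ≥ 1 and every integer r with 1 ≤ r ≤ l + 1: I(t,l,r) ≤ e^{β² t} · β^{2(r−3)} · t^{l+r−2}/(l+r−2)!. (The key simplex-integral estimate (B.2) in the proof of Lemma 4.3.) -/

import Mathlib

/-!
Write `a = β²`. On `Δ(t,l)` the extended coordinates are nonnegative and every initial sum
`t_1 + ⋯ + t_m` with `m ≤ l + 1` is at most `t`. For `r = k + 2` the bound `e^z - 1 ≤ z e^z`
therefore dominates the integrand by `e^{a t} a^k t_1 ⋯ t_k`, which is integrated by Dirichlet's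
formula `∫_{Δ(t,l)} ∏ t_j^{n_j}/n_j! = t^{l + Σ n_j}/(l + Σ n_j)!` (slice along `t_1` and use the
Beta integral). For `r = 1` the integrand is `e^{a t_1}`; the slice at `t_1 = s` has volume at most
`t^{l-1}/(l-1)!` and `∫_{-∞}^t e^{a s} ds = e^{a t}/a`. As `β < 1`, lowering the power of `β` in
these two bounds only increases them.
-/

open scoped BigOperators
open MeasureTheory

noncomputable section

/-- The open simplex `Δ(t,l) = {(t_1,…,t_l) ∈ (0,∞)^l : t_1 + ⋯ + t_l < t}`. -/
def simplexSet (t : ℝ) (l : ℕ) : Set (Fin l → ℝ) :=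
  {x | (∀ j, 0 < x j) ∧ ∑ j, x j < t}

/-- Extended coordinates: `t_0 := 0`, `t_j := x_{j-1}` for `1 ≤ j ≤ l`, and
`t_{l+1} := t - (t_1 + ⋯ + t_l)`. -/
def coordExt (t : ℝ) (l : ℕ) (x : Fin l → ℝ) (j : ℕ) : ℝ :=
  if hj : 1 ≤ j ∧ j ≤ l then x ⟨j - 1, by omega⟩
  else if j = 0 then 0 else t - ∑ i, x i

/-- The simplex integral
`I(t,l,r) = ∫_{Δ(t,l)} ∏_{j=1}^{r-2} (e^{β² t_j} − 1) · e^{β² (t_{r−1} + t_r)} dt_1 ⋯ dt_l`. -/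
def Iint (β t : ℝ) (l r : ℕ) : ℝ :=
  ∫ x in simplexSet t l,
    (∏ j ∈ Finset.Icc 1 (r - 2), (Real.exp (β ^ 2 * coordExt t l x j) - 1)) *
      Real.exp (β ^ 2 * (coordExt t l x (r - 1) + coordExt t l x r))

open scoped Nat ENNReal

theorem integral_pow_div_factorial_mul_sub_pow_div_factorial (t : ℝ) (i m : ℕ) :
    ∫ s in (0 : ℝ)..t, s ^ i / i ! * ((t - s) ^ m / m !) =
      t ^ (i + m + 1) / (i + m + 1)! := by
  induction i generalizing m with
  | zero =>
    simp only [pow_zero, Nat.factorial_zero, Nat.cast_one, div_one, one_mul, zero_add,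
      intervalIntegral.integral_div, intervalIntegral.integral_comp_sub_left (fun s => s ^ m),
      sub_self, sub_zero, integral_pow, Nat.factorial_succ]
    push_cast
    field_simp
    simp
  | succ i ih =>
    have hu (s : ℝ) : HasDerivAt (fun s : ℝ => s ^ (i + 1) / (i + 1)!) (s ^ i / i !) s := by
      refine ((hasDerivAt_pow (i + 1) s).div_const _).congr_deriv ?_
      rw [Nat.factorial_succ]; push_cast; field_simp
    have hv (s : ℝ) : HasDerivAt (fun s : ℝ => -((t - s) ^ (m + 1) / (m + 1)!))
        ((t - s) ^ m / m !) s := by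
      refine ((((hasDerivAt_id s).const_sub t).pow (m + 1)).div_const _).neg.congr_deriv ?_
      rw [Nat.factorial_succ]; push_cast; field_simp; simp
    rw [intervalIntegral.integral_mul_deriv_eq_deriv_mul (fun s _ => hu s) (fun s _ => hv s)
      ((by fun_prop : Continuous fun s : ℝ => s ^ i / i !).intervalIntegrable _ _)
      ((by fun_prop : Continuous fun s : ℝ => (t - s) ^ m / m !).intervalIntegrable _ _)]
    simp only [mul_neg, intervalIntegral.integral_neg, ih (m + 1)]
    rw [show i + (m + 1) + 1 = i + 1 + m + 1 by ring]
    simp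

theorem integral_le_of_lintegral_ofReal_le {α : Type*} [MeasurableSpace α] {μ : Measure α}
    {f : α → ℝ} {c : ℝ} (hc : 0 ≤ c)
    (h : ∫⁻ a, ENNReal.ofReal (f a) ∂μ ≤ ENNReal.ofReal c) :
    ∫ a, f a ∂μ ≤ c := by
  by_cases hf : Integrable f μ
  · rw [integral_eq_lintegral_pos_part_sub_lintegral_neg_part hf]
    exact (sub_le_self _ ENNReal.toReal_nonneg).trans (ENNReal.toReal_le_of_le_ofReal hc h)
  · rw [integral_undef hf]
    exact hc

theorem Real.exp_sub_one_le_mul_exp (z : ℝ) : Real.exp z - 1 ≤ z * Real.exp z := by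
  have h := Real.one_sub_le_exp_neg z
  have hz : Real.exp z - 1 = Real.exp z * (1 - Real.exp (-z)) := by
    rw [mul_sub, ← Real.exp_add]
    simp
  rw [hz, mul_comm z]
  gcongr
  linarith

theorem setLIntegral_Iic_exp_mul {a : ℝ} (ha : 0 < a) (c : ℝ) :
    ∫⁻ s in Set.Iic c, ENNReal.ofReal (Real.exp (a * s)) =
      ENNReal.ofReal (Real.exp (a * c) / a) := by
  rw [← ofReal_integral_eq_lintegral_ofReal (integrableOn_exp_mul_Iic ha c)
    (ae_of_all _ fun _ => (Real.exp_pos _).le), integral_exp_mul_Iic ha]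

theorem isOpen_simplexSet (t : ℝ) (l : ℕ) : IsOpen (simplexSet t l) := by
  simp only [simplexSet, Set.ofPred_and, Set.ofPred_forall]
  exact (isOpen_iInter_of_finite fun j => isOpen_lt continuous_const (continuous_apply j)).inter
    (isOpen_lt (continuous_finsetSum _ fun j _ => continuous_apply j) continuous_const)

theorem measurableSet_simplexSet (t : ℝ) (l : ℕ) : MeasurableSet (simplexSet t l) :=
  (isOpen_simplexSet t l).measurableSet

theorem simplexSet_mono {t t' : ℝ} (h : t ≤ t') (l : ℕ) :
    simplexSet t l ⊆ simplexSet t' l :=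
  fun _ hx => ⟨hx.1, hx.2.trans_le h⟩

theorem simplexSet_zero {t : ℝ} (ht : 0 < t) : simplexSet t 0 = Set.univ := by
  ext; simp [simplexSet, ht]

theorem cons_mem_simplexSet_succ {t s : ℝ} {l : ℕ} {y : Fin l → ℝ} :
    (Fin.cons s y : Fin (l + 1) → ℝ) ∈ simplexSet t (l + 1) ↔
      s ∈ Set.Ioo 0 t ∧ y ∈ simplexSet (t - s) l := by
  simp only [simplexSet, Set.mem_ofPred_eq, Set.mem_Ioo, Fin.forall_fin_succ, Fin.cons_zero,
    Fin.cons_succ, Fin.sum_cons]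
  constructor
  · rintro ⟨⟨hs, hy⟩, hsum⟩
    have : 0 ≤ ∑ j, y j := Finset.sum_nonneg fun j _ => (hy j).le
    exact ⟨⟨hs, by linarith⟩, hy, by linarith⟩
  · rintro ⟨⟨hs, -⟩, hy, hsum⟩
    exact ⟨⟨hs, hy⟩, by linarith⟩

theorem setLIntegral_simplexSet_succ (t : ℝ) (l : ℕ) {F : (Fin (l + 1) → ℝ) → ℝ≥0∞}
    (hF : Measurable F) :
    ∫⁻ x in simplexSet t (l + 1), F x =
      ∫⁻ s in Set.Ioo 0 t, ∫⁻ y in simplexSet (t - s) l, F (Fin.cons s y) := by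
  have he := (volume_preserving_piFinSuccAbove (fun _ : Fin (l + 1) => ℝ) 0).symm
  have hcons (p : ℝ × (Fin l → ℝ)) :
      (MeasurableEquiv.piFinSuccAbove (fun _ : Fin (l + 1) => ℝ) 0).symm p = Fin.cons p.1 p.2 :=
    Fin.insertNth_zero' _ _
  have hG : Measurable ((simplexSet t (l + 1)).indicator F) :=
    hF.indicator (measurableSet_simplexSet _ _)
  rw [← lintegral_indicator (measurableSet_simplexSet _ _),
    ← he.lintegral_comp hG, Measure.volume_eq_prod,
    lintegral_prod (fun p => (simplexSet t (l + 1)).indicator F _)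
      (hG.comp he.measurable).aemeasurable,
    ← lintegral_indicator measurableSet_Ioo]
  simp only [hcons]
  refine lintegral_congr fun s => ?_
  by_cases hs : s ∈ Set.Ioo 0 t
  · rw [Set.indicator_of_mem hs, ← lintegral_indicator (measurableSet_simplexSet _ _)]
    refine lintegral_congr fun y => ?_
    by_cases hy : y ∈ simplexSet (t - s) l
    · rw [Set.indicator_of_mem hy, Set.indicator_of_mem (cons_mem_simplexSet_succ.2 ⟨hs, hy⟩)]
    · rw [Set.indicator_of_notMem hy,
        Set.indicator_of_notMem fun h => hy (cons_mem_simplexSet_succ.1 h).2]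
  · rw [Set.indicator_of_notMem hs]
    refine (lintegral_congr fun y => ?_).trans lintegral_zero
    exact Set.indicator_of_notMem (fun h => hs (cons_mem_simplexSet_succ.1 h).1) _

theorem setLIntegral_Ioo_pow_div_factorial_mul {t : ℝ} (ht : 0 ≤ t) (i m : ℕ) :
    ∫⁻ s in Set.Ioo 0 t, ENNReal.ofReal (s ^ i / i !) * ENNReal.ofReal ((t - s) ^ m / m !) =
      ENNReal.ofReal (t ^ (i + m + 1) / (i + m + 1)!) := by
  have hnonneg : ∀ s ∈ Set.Ioo 0 t, 0 ≤ s ^ i / i ! ∧ 0 ≤ (t - s) ^ m / m ! := fun s hs =>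
    ⟨by have := hs.1.le; positivity, by have := sub_nonneg.2 hs.2.le; positivity⟩
  have hcont : Continuous fun s : ℝ => s ^ i / i ! * ((t - s) ^ m / m !) := by fun_prop
  rw [setLIntegral_congr_fun measurableSet_Ioo
      fun s hs => (ENNReal.ofReal_mul (hnonneg s hs).1).symm,
    ← ofReal_integral_eq_lintegral_ofReal
      (hcont.integrableOn_Icc.mono_set Set.Ioo_subset_Icc_self)
      ((ae_restrict_iff' measurableSet_Ioo).2 (ae_of_all _ fun s hs =>
        mul_nonneg (hnonneg s hs).1 (hnonneg s hs).2)),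
    ← integral_Ioc_eq_integral_Ioo, ← intervalIntegral.integral_of_le ht,
    integral_pow_div_factorial_mul_sub_pow_div_factorial]

theorem setLIntegral_simplexSet_prod_pow_div_factorial {t : ℝ} (ht : 0 < t) (l : ℕ)
    (n : Fin l → ℕ) :
    ∫⁻ x in simplexSet t l, ∏ j, ENNReal.ofReal (x j ^ n j / (n j)!) =
      ENNReal.ofReal (t ^ (l + ∑ j, n j) / (l + ∑ j, n j)!) := by
  induction l generalizing t with
  | zero => simp [simplexSet_zero ht, volume_pi]
  | succ l ih =>
    rw [setLIntegral_simplexSet_succ t l (by fun_prop)]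
    set S := ∑ j : Fin l, n j.succ
    have hinner : ∀ s ∈ Set.Ioo 0 t,
        ∫⁻ y in simplexSet (t - s) l,
            ∏ j, ENNReal.ofReal ((Fin.cons s y : Fin (l + 1) → ℝ) j ^ n j / (n j)!) =
          ENNReal.ofReal (s ^ n 0 / (n 0)!) *
            ENNReal.ofReal ((t - s) ^ (l + S) / (l + S)!) := fun s hs => by
      simp only [Fin.prod_univ_succ, Fin.cons_zero, Fin.cons_succ]
      rw [lintegral_const_mul _ (by fun_prop), ih (sub_pos.2 hs.2) (fun j => n j.succ)]
    rw [setLIntegral_congr_fun measurableSet_Ioo hinner,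
      setLIntegral_Ioo_pow_div_factorial_mul ht.le, Fin.sum_univ_succ,
      show n 0 + (l + S) + 1 = l + 1 + (n 0 + S) by ring]

theorem volume_simplexSet {t : ℝ} (ht : 0 < t) (l : ℕ) :
    volume (simplexSet t l) = ENNReal.ofReal (t ^ l / l !) := by
  simpa using setLIntegral_simplexSet_prod_pow_div_factorial ht l 0

theorem setLIntegral_simplexSet_exp_mul_head_le {a t : ℝ} (ha : 0 < a) (ht : 0 < t) (l : ℕ) :
    ∫⁻ x in simplexSet t (l + 1), ENNReal.ofReal (Real.exp (a * x 0)) ≤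
      ENNReal.ofReal (Real.exp (a * t) / a * (t ^ l / l !)) := by
  rw [setLIntegral_simplexSet_succ t l (by fun_prop)]
  simp only [Fin.cons_zero, setLIntegral_const]
  calc ∫⁻ s in Set.Ioo 0 t, ENNReal.ofReal (Real.exp (a * s)) * volume (simplexSet (t - s) l)
      ≤ ∫⁻ s in Set.Ioo 0 t, ENNReal.ofReal (Real.exp (a * s)) * volume (simplexSet t l) :=
        setLIntegral_mono' measurableSet_Ioo fun s hs => by
          gcongr
          exact simplexSet_mono (by linarith [hs.1]) l
    _ ≤ (∫⁻ s in Set.Iic t, ENNReal.ofReal (Real.exp (a * s))) * volume (simplexSet t l) := by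
        rw [lintegral_mul_const _ (by fun_prop)]
        gcongr
        exact Set.Ioo_subset_Iio_self.trans Set.Iio_subset_Iic_self
    _ = ENNReal.ofReal (Real.exp (a * t) / a * (t ^ l / l !)) := by
        rw [setLIntegral_Iic_exp_mul ha, volume_simplexSet ht,
          ← ENNReal.ofReal_mul (by positivity)]

section coordExt

variable {t : ℝ} {l : ℕ} {x : Fin l → ℝ}

theorem coordExt_zero : coordExt t l x 0 = 0 := by
  simp [coordExt]

theorem coordExt_succ (i : Fin l) : coordExt t l x (i + 1) = x i := by
  simp [coordExt, i.isLt]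

theorem coordExt_last : coordExt t l x (l + 1) = t - ∑ i, x i := by
  simp [coordExt]

theorem coordExt_nonneg (hx : x ∈ simplexSet t l) (j : ℕ) : 0 ≤ coordExt t l x j := by
  unfold coordExt
  split_ifs
  · exact (hx.1 _).le
  · exact le_rfl
  · exact sub_nonneg.2 hx.2.le

@[to_additive]
theorem prod_Icc_coordExt {M : Type*} [CommMonoid M] (f : ℝ → M) {k : ℕ} (hk : k ≤ l) :
    ∏ j ∈ Finset.Icc 1 k, f (coordExt t l x j) =
      ∏ i : Fin l, if (i : ℕ) < k then f (x i) else 1 := by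
  have himage : Finset.Icc 1 k =
      (Finset.univ.filter fun i : Fin l => (i : ℕ) < k).image fun i : Fin l => (i : ℕ) + 1 := by
    ext j
    simp only [Finset.mem_Icc, Finset.mem_image, Finset.mem_filter, Finset.mem_univ, true_and]
    constructor
    · intro hj
      exact ⟨⟨j - 1, by omega⟩, by simp; omega, by simp; omega⟩
    · rintro ⟨i, hi, rfl⟩
      omega
  rw [himage, Finset.prod_image fun i _ j _ h => Fin.ext (by simpa using h), ← Finset.prod_filter]
  simp only [coordExt_succ]

theorem sum_Icc_coordExt_le (hx : x ∈ simplexSet t l) {m : ℕ} (hm : m ≤ l + 1) :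
    ∑ j ∈ Finset.Icc 1 m, coordExt t l x j ≤ t :=
  calc ∑ j ∈ Finset.Icc 1 m, coordExt t l x j
      ≤ ∑ j ∈ Finset.Icc 1 (l + 1), coordExt t l x j :=
        Finset.sum_le_sum_of_subset_of_nonneg (Finset.Icc_subset_Icc le_rfl hm)
          fun j _ _ => coordExt_nonneg hx j
    _ = t := by
        rw [Finset.sum_Icc_succ_top (by omega), sum_Icc_coordExt (fun c => c) le_rfl, coordExt_last]
        simp

end coordExt

theorem Iint_integrand_le {a t : ℝ} (ha : 0 ≤ a) {l k : ℕ} (hk : k + 1 ≤ l)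
    {x : Fin l → ℝ} (hx : x ∈ simplexSet t l) :
    (∏ j ∈ Finset.Icc 1 k, (Real.exp (a * coordExt t l x j) - 1)) *
        Real.exp (a * (coordExt t l x (k + 1) + coordExt t l x (k + 2))) ≤
      Real.exp (a * t) * a ^ k * ∏ i : Fin l, if (i : ℕ) < k then x i else 1 := by
  set c := coordExt t l x
  have hc : ∀ j, 0 ≤ a * c j := fun j => mul_nonneg ha (coordExt_nonneg hx j)
  have hprod : ∏ j ∈ Finset.Icc 1 k, (Real.exp (a * c j) - 1) ≤
      a ^ k * (∏ j ∈ Finset.Icc 1 k, c j) * Real.exp (a * ∑ j ∈ Finset.Icc 1 k, c j) :=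
    calc ∏ j ∈ Finset.Icc 1 k, (Real.exp (a * c j) - 1)
        ≤ ∏ j ∈ Finset.Icc 1 k, (a * c j * Real.exp (a * c j)) :=
          Finset.prod_le_prod (fun j _ => by linarith [Real.add_one_le_exp (a * c j), hc j])
            fun j _ => Real.exp_sub_one_le_mul_exp _
      _ = _ := by
          rw [Finset.prod_mul_distrib, Finset.prod_mul_distrib, Finset.prod_const, Nat.card_Icc,
            Nat.add_sub_cancel, ← Real.exp_sum, Finset.mul_sum]
  have hsum : ∑ j ∈ Finset.Icc 1 k, c j + (c (k + 1) + c (k + 2)) ≤ t := by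
    have := sum_Icc_coordExt_le hx (m := k + 2) (by omega)
    rwa [Finset.sum_Icc_succ_top (by omega), Finset.sum_Icc_succ_top (by omega), add_assoc] at this
  have hP : 0 ≤ ∏ j ∈ Finset.Icc 1 k, c j :=
    Finset.prod_nonneg fun j _ => coordExt_nonneg hx j
  calc (∏ j ∈ Finset.Icc 1 k, (Real.exp (a * c j) - 1)) * Real.exp (a * (c (k + 1) + c (k + 2)))
      ≤ a ^ k * (∏ j ∈ Finset.Icc 1 k, c j) * Real.exp (a * ∑ j ∈ Finset.Icc 1 k, c j) *
          Real.exp (a * (c (k + 1) + c (k + 2))) :=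
        mul_le_mul_of_nonneg_right hprod (Real.exp_pos _).le
    _ = a ^ k * (∏ j ∈ Finset.Icc 1 k, c j) *
          Real.exp (a * (∑ j ∈ Finset.Icc 1 k, c j + (c (k + 1) + c (k + 2)))) := by
        rw [mul_assoc, ← Real.exp_add, ← mul_add]
    _ ≤ a ^ k * (∏ j ∈ Finset.Icc 1 k, c j) * Real.exp (a * t) := by
        gcongr
    _ = _ := by
        simp only [c]
        rw [prod_Icc_coordExt (fun c => c) (by omega : k ≤ l)]
        ring

theorem Iint_one_le {β t : ℝ} (hβ : β ≠ 0) (ht : 0 < t) (l : ℕ) :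
    Iint β t (l + 1) 1 ≤ Real.exp (β ^ 2 * t) / β ^ 2 * (t ^ l / l !) := by
  have hβ2 : 0 < β ^ 2 := by positivity
  refine integral_le_of_lintegral_ofReal_le (by positivity) ?_
  have hc1 (x : Fin (l + 1) → ℝ) : coordExt t (l + 1) x 1 = x 0 := coordExt_succ 0
  simpa [coordExt_zero, hc1] using setLIntegral_simplexSet_exp_mul_head_le hβ2 ht l

theorem Iint_add_two_le (β : ℝ) {t : ℝ} (ht : 0 < t) {l k : ℕ} (hk : k + 1 ≤ l) :
    Iint β t l (k + 2) ≤ Real.exp (β ^ 2 * t) * (β ^ 2) ^ k * (t ^ (l + k) / (l + k)!) := by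
  set C := Real.exp (β ^ 2 * t) * (β ^ 2) ^ k
  set n : Fin l → ℕ := fun i => if (i : ℕ) < k then 1 else 0
  have hn : ∑ i, n i = k := by
    simp [n, Finset.sum_boole, Fin.card_filter_val_lt, min_eq_right (by omega : k ≤ l)]
  refine integral_le_of_lintegral_ofReal_le (by positivity) ?_
  calc _ ≤ ∫⁻ x in simplexSet t l, ENNReal.ofReal C * ∏ i, ENNReal.ofReal (x i ^ n i / (n i)!) := by
        refine setLIntegral_mono' (measurableSet_simplexSet t l) fun x hx => ?_
        rw [← ENNReal.ofReal_prod_of_nonneg fun i _ => by have := (hx.1 i).le; positivity,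
          ← ENNReal.ofReal_mul (by positivity)]
        refine ENNReal.ofReal_le_ofReal ((Iint_integrand_le (sq_nonneg β) hk hx).trans_eq ?_)
        congr 1
        refine Finset.prod_congr rfl fun i _ => ?_
        by_cases hi : (i : ℕ) < k <;> simp [n, hi]
    _ = ENNReal.ofReal (C * (t ^ (l + k) / (l + k)!)) := by
        rw [lintegral_const_mul' _ _ ENNReal.ofReal_ne_top,
          setLIntegral_simplexSet_prod_pow_div_factorial ht, hn,
          ← ENNReal.ofReal_mul (by positivity)]

/-- The key simplex-integral estimate (B.2): for `0 < β < 1` and `t ≥ max{β⁻², 2}`,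
`I(t,l,r) ≤ e^{β² t} β^{2(r−3)} t^{l+r−2}/(l+r−2)!`. -/
theorem stmt8 (β : ℝ) (hβ0 : 0 < β) (hβ1 : β < 1) (t : ℝ)
    (ht : max (β ^ 2)⁻¹ 2 ≤ t) :
    ∀ l r : ℕ, 1 ≤ l → 1 ≤ r → r ≤ l + 1 →
      Iint β t l r ≤
        Real.exp (β ^ 2 * t) * β ^ (2 * ((r : ℤ) - 3)) *
          t ^ (l + r - 2) / (((l + r - 2).factorial : ℝ)) := by
  intro l r hl hr hrl
  have ht0 : 0 < t := two_pos.trans_le ((le_max_right _ _).trans ht)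
  have hzpow {m n : ℤ} (h : n ≤ m) : β ^ m ≤ β ^ n :=
    zpow_le_zpow_right_of_le_one₀ hβ0 hβ1.le h
  obtain rfl | ⟨k, rfl⟩ : r = 1 ∨ ∃ k, r = k + 2 := by
    rcases r with _ | _ | k
    · omega
    · exact Or.inl rfl
    · exact Or.inr ⟨k, rfl⟩
  · obtain ⟨l, rfl⟩ : ∃ l', l = l' + 1 := ⟨l - 1, by omega⟩
    calc Iint β t (l + 1) 1 ≤ Real.exp (β ^ 2 * t) * β ^ (-2 : ℤ) * (t ^ l / l !) := by
          simpa [div_eq_mul_inv, zpow_neg, mul_assoc] using Iint_one_le hβ0.ne' ht0 l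
      _ ≤ _ := by
          rw [show l + 1 + 1 - 2 = l by omega, mul_div_assoc]
          gcongr _ * ?_ * _
          exact hzpow (by norm_num)
  · calc Iint β t l (k + 2)
          ≤ Real.exp (β ^ 2 * t) * β ^ (2 * (k : ℤ)) * (t ^ (l + k) / (l + k)!) := by
          simpa [zpow_mul, ← pow_mul] using Iint_add_two_le β ht0 (by omega : k + 1 ≤ l)
      _ ≤ _ := by
          rw [show l + (k + 2) - 2 = l + k by omega, mul_div_assoc]
          gcongr _ * ?_ * _
          exact hzpow (by push_cast; omega)
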